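/- Let V be a complex vector space of dimension 2m (m ≥ 1) equipped with a nondegenerate alternating bilinear form ⟨ , ⟩. Let λ¹,…,λˢ be symmetric partitions contained in the m×m square and let F•¹,…,F•ˢ be isotropic full flags in V. Then the Lagrangian involution permutes the solutions of the corresponding Schubert problem: the intersection X_{λ¹}F•¹ ∩ X_{λ²}F•² ∩ ⋯ ∩ X_{λˢ}F•ˢ is mapped onto itself by H ↦ ∠(H), which is an involutive bijection of this set. -/

import Mathlib

open Module

/-- The annihilator `∠(W) = {v ∈ V | ⟨v,w⟩ = 0 for all w ∈ W}` of a subspace `W`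
with respect to a bilinear form `B`. -/
def ann {V : Type*} [AddCommGroup V] [Module ℂ V]
    (B : LinearMap.BilinForm ℂ V) (W : Submodule ℂ V) : Submodule ℂ V :=
  W.dualAnnihilator.comap B

/-- A full flag `F₀ = 0 ⊊ F₁ ⊊ ⋯ ⊊ F_{2m} = V` with `dim Fᵢ = i`. -/
def IsFullFlag (m : ℕ) {V : Type*} [AddCommGroup V] [Module ℂ V]
    (F : Fin (2 * m + 1) → Submodule ℂ V) : Prop :=
  F 0 = ⊥ ∧ F (Fin.last (2 * m)) = ⊤ ∧ StrictMono F ∧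
    ∀ i, finrank ℂ (F i) = (i : ℕ)

/-- The annihilator flag `∠(F•)`, whose `i`-th member is `∠(F_{2m-i})`. -/
def annFlag (m : ℕ) {V : Type*} [AddCommGroup V] [Module ℂ V]
    (B : LinearMap.BilinForm ℂ V) (F : Fin (2 * m + 1) → Submodule ℂ V) :
    Fin (2 * m + 1) → Submodule ℂ V :=
  fun i => ann B (F i.rev)

/-- The conjugate partition `λ'ⱼ = #{i | λᵢ ≥ j}` of a partition contained in the
`m × m` square, where `lam i` is the `(i+1)`-st part `λ_{i+1}`. -/
def conjugatePartition (m : ℕ) (lam : Fin m → ℕ) : Fin m → ℕ :=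
  fun j => (Finset.univ.filter fun i : Fin m => (j : ℕ) + 1 ≤ lam i).card

/-- The Schubert variety
`X_λ F• = {H | dim H = m and dim (H ∩ F_{m+i-λᵢ}) ≥ i for i = 1,…,m}`. -/
def SchubertVariety (m : ℕ) {V : Type*} [AddCommGroup V] [Module ℂ V]
    (lam : Fin m → ℕ) (F : Fin (2 * m + 1) → Submodule ℂ V) :
    Set (Submodule ℂ V) :=
  {H | finrank ℂ H = m ∧ ∀ i : Fin m,
    (i : ℕ) + 1 ≤
      finrank ℂ ↥(H ⊓ F ⟨m + ((i : ℕ) + 1) - lam i, by have := i.isLt; omega⟩)}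

/-
As `B` is nondegenerate, `dim ∠(H) ∩ ∠(W) = dim V - dim H - dim W + dim (H ∩ W)`.
For an isotropic flag `F_{m+i-λᵢ} = ∠(F_{m+λᵢ-i})`, so for `dim H = m` the `i`-th Schubert
condition on `∠(H)` becomes `dim (H ∩ F_{m+λᵢ-i}) ≥ λᵢ`. If `λᵢ > 0`, put `j = λᵢ`: the
parts `λ₁, …, λᵢ` are all `≥ j`, so `λ'ⱼ ≥ i` and `F_{m+j-λ'ⱼ} ⊆ F_{m+λᵢ-i}`; the `j`-th
Schubert condition of `H` for the conjugate partition `λ'` then gives the bound. Hence `∠`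
maps `X_{λ'} F•` into `X_λ ∠(F•)`, and for symmetric `λ` and isotropic `F•` it maps `X_λ F•`
to itself; it is an involution because `B` is reflexive.
-/

section Annihilator

variable {V : Type*} [AddCommGroup V] [Module ℂ V] (B : LinearMap.BilinForm ℂ V)

lemma mem_ann_iff {W : Submodule ℂ V} {v : V} : v ∈ ann B W ↔ ∀ w ∈ W, B v w = 0 := by
  simp [ann, Submodule.mem_dualAnnihilator]

lemma ann_eq_orthogonal (hB : B.IsRefl) (W : Submodule ℂ V) : ann B W = B.orthogonal W := by
  ext v
  rw [mem_ann_iff, LinearMap.BilinForm.mem_orthogonal_iff]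
  exact forall₂_congr fun w _ => hB.eq_iff

lemma ann_ann [FiniteDimensional ℂ V] (hB : B.Nondegenerate) (hB₀ : B.IsRefl)
    (W : Submodule ℂ V) : ann B (ann B W) = W := by
  rw [ann_eq_orthogonal B hB₀, ann_eq_orthogonal B hB₀,
    LinearMap.BilinForm.orthogonal_orthogonal hB hB₀]

lemma finrank_ann_add_finrank [FiniteDimensional ℂ V] (hB : B.Nondegenerate)
    (W : Submodule ℂ V) : finrank ℂ (ann B W) + finrank ℂ W = finrank ℂ V := by
  have hdual : finrank ℂ (ann B W) = finrank ℂ W.dualAnnihilator :=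
    ((B.toDual hB).ofSubmodule' W.dualAnnihilator).finrank_eq
  rw [hdual, add_comm, Subspace.finrank_add_finrank_dualAnnihilator_eq]

lemma ann_sup (W W' : Submodule ℂ V) : ann B (W ⊔ W') = ann B W ⊓ ann B W' := by
  rw [ann, ann, ann, Submodule.dualAnnihilator_sup_eq, Submodule.comap_inf]

lemma finrank_ann_inf_ann_add [FiniteDimensional ℂ V] (hB : B.Nondegenerate)
    (H W : Submodule ℂ V) :
    finrank ℂ ↥(ann B H ⊓ ann B W) + finrank ℂ H + finrank ℂ W
      = finrank ℂ V + finrank ℂ ↥(H ⊓ W) := by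
  have hsup := finrank_ann_add_finrank B hB (H ⊔ W)
  have hmod := Submodule.finrank_sup_add_finrank_inf_eq H W
  rw [ann_sup] at hsup
  omega

end Annihilator

lemma succ_le_conjugatePartition {m : ℕ} {lam : Fin m → ℕ} (hanti : Antitone lam)
    {i j : Fin m} (hij : (j : ℕ) + 1 ≤ lam i) :
    (i : ℕ) + 1 ≤ conjugatePartition m lam j := by
  calc (i : ℕ) + 1 = (Finset.Iic i).card := (Fin.card_Iic i).symm
    _ ≤ conjugatePartition m lam j := by
      refine Finset.card_le_card fun k hk => ?_
      simp only [Finset.mem_filter, Finset.mem_univ, true_and]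
      exact hij.trans (hanti (Finset.mem_Iic.mp hk))

section Schubert

variable {m : ℕ} {V : Type*} [AddCommGroup V] [Module ℂ V] [FiniteDimensional ℂ V]
  {lam : Fin m → ℕ} {F : Fin (2 * m + 1) → Submodule ℂ V} {H : Submodule ℂ V}

lemma le_finrank_inf_of_mem_schubertVariety_conjugate (hanti : Antitone lam)
    (hF : Monotone F) (hH : H ∈ SchubertVariety m (conjugatePartition m lam) F)
    {i : Fin m} (hi : lam i ≤ m) {a : Fin (2 * m + 1)} (ha : m + lam i ≤ a + ((i : ℕ) + 1)) :
    lam i ≤ finrank ℂ ↥(H ⊓ F a) := by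
  obtain hi₀ | hi₀ := Nat.eq_zero_or_pos (lam i)
  · simp [hi₀]
  have hj : lam i - 1 < m := by omega
  have hconj : (i : ℕ) + 1 ≤ conjugatePartition m lam ⟨lam i - 1, hj⟩ :=
    succ_le_conjugatePartition hanti (show lam i - 1 + 1 ≤ lam i by omega)
  calc lam i = (lam i - 1) + 1 := by omega
    _ ≤ _ := hH.2 ⟨lam i - 1, hj⟩
    _ ≤ finrank ℂ ↥(H ⊓ F a) := by
      refine Submodule.finrank_mono (inf_le_inf_left H (hF (Fin.le_def.mpr ?_)))
      change m + (lam i - 1 + 1) - conjugatePartition m lam ⟨lam i - 1, hj⟩ ≤ a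
      omega

lemma ann_mem_schubertVariety_annFlag (hdim : finrank ℂ V = 2 * m)
    (B : LinearMap.BilinForm ℂ V) (hB : B.Nondegenerate)
    (hanti : Antitone lam) (hle : ∀ i, lam i ≤ m) (hF : IsFullFlag m F)
    (hH : H ∈ SchubertVariety m (conjugatePartition m lam) F) :
    ann B H ∈ SchubertVariety m lam (annFlag m B F) := by
  obtain ⟨-, -, hFmono, hFrank⟩ := hF
  have hHm := hH.1
  have hann := finrank_ann_add_finrank B hB H
  refine ⟨by omega, fun i => ?_⟩
  set a := (⟨m + ((i : ℕ) + 1) - lam i, by omega⟩ : Fin (2 * m + 1)).rev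
  have ha : (a : ℕ) + ((i : ℕ) + 1) = m + lam i := by
    have := hle i
    have := i.isLt
    simp only [a, Fin.val_rev]
    omega
  have hdimH := le_finrank_inf_of_mem_schubertVariety_conjugate hanti hFmono.monotone hH
    (hle i) ha.ge
  have hformula := finrank_ann_inf_ann_add B hB H (F a)
  rw [hFrank a] at hformula
  change _ ≤ finrank ℂ ↥(ann B H ⊓ ann B (F a))
  omega

end Schubert

theorem stmt5_general (m : ℕ) (V : Type*) [AddCommGroup V] [Module ℂ V]
    [FiniteDimensional ℂ V] (hdim : finrank ℂ V = 2 * m)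
    (B : LinearMap.BilinForm ℂ V) (halt : B.IsAlt) (hB : B.Nondegenerate)
    (s : ℕ) (lam : Fin s → Fin m → ℕ)
    (hanti : ∀ k, Antitone (lam k)) (hle : ∀ k i, lam k i ≤ m)
    (hsym : ∀ k, conjugatePartition m (lam k) = lam k)
    (F : Fin s → Fin (2 * m + 1) → Submodule ℂ V)
    (hF : ∀ k, IsFullFlag m (F k)) (hiso : ∀ k, annFlag m B (F k) = F k) :
    ann B '' (⋂ k, SchubertVariety m (lam k) (F k))
        = (⋂ k, SchubertVariety m (lam k) (F k)) ∧
    Set.BijOn (ann B) (⋂ k, SchubertVariety m (lam k) (F k))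
        (⋂ k, SchubertVariety m (lam k) (F k)) ∧
    ∀ H ∈ ⋂ k, SchubertVariety m (lam k) (F k), ann B (ann B H) = H := by
  have hinv : ∀ H, ann B (ann B H) = H := ann_ann B hB halt.isRefl
  have hmaps : Set.MapsTo (ann B) (⋂ k, SchubertVariety m (lam k) (F k))
      (⋂ k, SchubertVariety m (lam k) (F k)) := fun H hH => Set.mem_iInter.mpr fun k => by
    have := ann_mem_schubertVariety_annFlag hdim B hB (hanti k) (hle k) (hF k)
      (H := H) (by rw [hsym k]; exact Set.mem_iInter.mp hH k)
    rwa [hiso k] at this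
  have hbij : Set.BijOn (ann B) _ _ :=
    Set.InvOn.bijOn ⟨fun H _ => hinv H, fun H _ => hinv H⟩ hmaps hmaps
  exact ⟨hbij.image_eq, hbij, fun H _ => hinv H⟩

theorem stmt5 (m : ℕ) (hm : 1 ≤ m) (V : Type*) [AddCommGroup V] [Module ℂ V]
    [FiniteDimensional ℂ V] (hdim : finrank ℂ V = 2 * m)
    (B : LinearMap.BilinForm ℂ V) (halt : B.IsAlt) (hB : B.Nondegenerate)
    (s : ℕ) (lam : Fin s → Fin m → ℕ)
    (hanti : ∀ k, Antitone (lam k)) (hle : ∀ k i, lam k i ≤ m)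
    (hsym : ∀ k, conjugatePartition m (lam k) = lam k)
    (F : Fin s → Fin (2 * m + 1) → Submodule ℂ V)
    (hF : ∀ k, IsFullFlag m (F k)) (hiso : ∀ k, annFlag m B (F k) = F k) :
    ann B '' (⋂ k, SchubertVariety m (lam k) (F k))
        = (⋂ k, SchubertVariety m (lam k) (F k)) ∧
    Set.BijOn (ann B) (⋂ k, SchubertVariety m (lam k) (F k))
        (⋂ k, SchubertVariety m (lam k) (F k)) ∧
    ∀ H ∈ ⋂ k, SchubertVariety m (lam k) (F k), ann B (ann B H) = H :=
  stmt5_general m V hdim B halt hB s lam hanti hle hsym F hF hiso
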